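/- Let (S_X, S_Z) be a CSS stabilizer code on a finite type Q satisfying the duality, single-logical-qubit, intersection, and T-invariance assumptions, let α : Finset Q be tolerable, and let ρ be an encoded state. Then E_α is nonempty and (1/|S_X|) · Σ_{c ∈ S_X} X_c (U X_α ρ X_α U†) X_c = X_α ((1/|E_α|) · Σ_{z ∈ E_α} Z_z (U ρ U†) Z_z) X_α. (Theorem 1, tolerable case: a tolerable X error propagates through the transversal T-type gate U followed by S_X-depolarization into the original error together with a uniformly random Z error drawn from E_α applied after U.) -/

import Mathlib

/-!
Compare the two sides entrywise. At the entry `(u + α, v + α)` both sides are `ρ u v` times an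
average of phases, and if `ρ u v ≠ 0` then `β = supp u` and `γ = supp v` lie in `Z_X(S)`. By
T-invariance, the phase that `U` contributes after the shift by `α ∆ c` is
`ζ^(g β - g γ) · i^(g(α ∩ γ) - g(α ∩ β))` times the character `(-1)^|α ∩ (β ∆ γ) ∩ c|`, whose
average over `S_X` is the indicator of `α ∩ (β ∆ γ) ∈ Z_Z(S)`. On the other side, `E_α` is a coset
`z₀ ∆ Z(Z(G_α))`: it is nonempty because `γ ↦ g(γ ∩ α) / 2 mod 2` is a character of `Z(G_α)`, hence
of the form `γ ↦ |γ ∩ z₀| mod 2`. So the average of `(-1)^|(β ∆ γ) ∩ z|` over `E_α` is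
`(-1)^|(β ∆ γ) ∩ z₀|` times the indicator of `β ∆ γ ∈ Z(G_α)`. Tolerability and duality make the two
indicators agree, and the congruence defining `E_α` makes the two phases agree.
-/

open Finset
open scoped symmDiff Matrix

namespace CC

variable {Q : Type*} [Fintype Q] [DecidableEq Q]

/-- A subgroup of the abelian group `(Finset Q, ∆)`. -/
def IsSubgroup (S : Set (Finset Q)) : Prop :=
  ∅ ∈ S ∧ ∀ a ∈ S, ∀ b ∈ S, a ∆ b ∈ S

/-- The subgroup of `(Finset Q, ∆)` generated by a set. -/
def closure (T : Set (Finset Q)) : Set (Finset Q) :=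
  ⋂₀ {S : Set (Finset Q) | IsSubgroup S ∧ T ⊆ S}

/-- A CSS stabilizer code on the qubits `Q`. -/
structure CSS (Q : Type*) [Fintype Q] [DecidableEq Q] where
  SX : Set (Finset Q)
  SZ : Set (Finset Q)
  hSX : IsSubgroup SX
  hSZ : IsSubgroup SZ
  comm : ∀ a ∈ SZ, ∀ b ∈ SX, 2 ∣ (a ∩ b).card

def ZX (C : CSS Q) : Set (Finset Q) := {γ | ∀ f ∈ C.SZ, 2 ∣ (γ ∩ f).card}

def ZZ (C : CSS Q) : Set (Finset Q) := {z | ∀ c ∈ C.SX, 2 ∣ (z ∩ c).card}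

/-- Duality assumption. -/
def Dual (C : CSS Q) : Prop :=
  C.SZ = {z | ∀ γ ∈ ZX C, 2 ∣ (z ∩ γ).card} ∧
  C.SX = {c | ∀ z ∈ ZZ C, 2 ∣ (c ∩ z).card}

def LogicalX (C : CSS Q) (l : Finset Q) : Prop := l ∈ ZX C ∧ l ∉ C.SX

def LogicalZ (C : CSS Q) (l : Finset Q) : Prop := l ∈ ZZ C ∧ l ∉ C.SZ

/-- Single-logical-qubit assumption. -/
def SingleQubit (C : CSS Q) : Prop :=
  (ZX C ≠ C.SX ∧ ∀ l l', LogicalX C l → LogicalX C l' → l ∆ l' ∈ C.SX) ∧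
  (ZZ C ≠ C.SZ ∧ ∀ l l', LogicalZ C l → LogicalZ C l' → l ∆ l' ∈ C.SZ)

/-- Intersection axiom. -/
def Inter (C : CSS Q) : Prop :=
  ZZ C = {x | ∃ α ∈ ZX C, ∃ β ∈ ZX C, x = α ∩ β}

def G (C : CSS Q) (α : Finset Q) : Set (Finset Q) :=
  closure (C.SZ ∪ {x | ∃ β ∈ ZX C, x = α ∩ β})

def H (C : CSS Q) (α : Finset Q) : Set (Finset Q) :=
  closure (C.SZ ∪ {x | ∃ β ∈ C.SX, x = α ∩ β})

def Zof (K : Set (Finset Q)) : Set (Finset Q) := {γ | ∀ h ∈ K, 2 ∣ (γ ∩ h).card}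

def Tolerable (C : CSS Q) (α : Finset Q) : Prop := ∀ z ∈ G C α, ¬ LogicalZ C z

def g (b : Q → ℤ) (s : Finset Q) : ℤ := ∑ q ∈ s, b q

/-- T-invariance assumption. -/
def TInv (C : CSS Q) (b : Q → ℤ) : Prop :=
  (∀ β ∈ C.SX, (8 : ℤ) ∣ g b β) ∧
  (∀ β ∈ C.SX, ∀ γ ∈ ZX C, (8 : ℤ) ∣ (g b β - 2 * g b (γ ∩ β)))

def E (C : CSS Q) (b : Q → ℤ) (α : Finset Q) : Set (Finset Q) :=
  {z | ∀ γ ∈ Zof (G C α), g b (γ ∩ α) ≡ 2 * ((z ∩ γ).card : ℤ) [ZMOD 4]}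

/- Quantum setting -/

abbrev M (Q : Type*) [Fintype Q] [DecidableEq Q] :=
  Matrix (Q → ZMod 2) (Q → ZMod 2) ℂ

def supp (v : Q → ZMod 2) : Finset Q := Finset.univ.filter (fun q => v q = 1)

def ind (α : Finset Q) : Q → ZMod 2 := fun q => if q ∈ α then 1 else 0

def XM (α : Finset Q) : M Q :=
  Matrix.of fun u v => if u = v + ind α then (1 : ℂ) else 0

noncomputable def ZM (α : Finset Q) : M Q :=
  Matrix.diagonal fun v => (-1 : ℂ) ^ (supp v ∩ α).card

noncomputable def AM (b : Q → ℤ) (α : Finset Q) : M Q :=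
  Matrix.diagonal fun v => Complex.I ^ (g b (α ∩ supp v))

noncomputable def UM (b : Q → ℤ) : M Q :=
  Matrix.diagonal fun v => Complex.exp (Real.pi * Complex.I / 4) ^ (g b (supp v))

def Encoded (C : CSS Q) (ρ : M Q) : Prop :=
  ρ.trace = 1 ∧
  (∀ c ∈ C.SX, XM c * ρ = ρ ∧ ρ * XM c = ρ) ∧
  (∀ f ∈ C.SZ, ZM f * ρ = ρ ∧ ρ * ZM f = ρ)

instance : Std.Commutative (α := Finset Q) (· ∆ ·) := ⟨symmDiff_comm⟩
instance : Std.Associative (α := Finset Q) (· ∆ ·) := ⟨symmDiff_assoc⟩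

/-- Iterated symmetric difference over a finite index set. -/
def bigΔ {ι : Type*} (s : Finset ι) (f : ι → Finset Q) : Finset Q :=
  s.fold (· ∆ ·) ∅ f

section SymmDiff

variable {ι : Type*}

theorem two_dvd_g_sub_card {b : ι → ℤ} (hb : ∀ q, Odd (b q)) (s : Finset ι) :
    2 ∣ g b s - #s := by
  rw [g, card_eq_sum_ones, Nat.cast_sum, Nat.cast_one, ← sum_sub_distrib]
  exact dvd_sum fun q _ => (hb q).sub_odd odd_one |>.two_dvd

variable [DecidableEq ι]

theorem inter_symmDiff_distrib_left (s t u : Finset ι) : s ∩ t ∆ u = (s ∩ t) ∆ (s ∩ u) :=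
  inf_symmDiff_distrib_left s t u

theorem inter_symmDiff_distrib_right (s t u : Finset ι) : s ∆ t ∩ u = (s ∩ u) ∆ (t ∩ u) :=
  inf_symmDiff_distrib_right s t u

theorem sum_symmDiff_add_sum_inter_add_sum_inter {M : Type*} [AddCommMonoid M] (f : ι → M)
    (s t : Finset ι) :
    ∑ x ∈ s ∆ t, f x + ∑ x ∈ s ∩ t, f x + ∑ x ∈ s ∩ t, f x = ∑ x ∈ s, f x + ∑ x ∈ t, f x := by
  have hunion : s ∆ t ∪ s ∩ t = s ∪ t := symmDiff_sup_inf s t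
  have hdisj : Disjoint (s ∆ t) (s ∩ t) := disjoint_symmDiff_inf s t
  rw [← sum_union hdisj, hunion, sum_union_inter]

theorem card_symmDiff_add_two_mul_card_inter (s t : Finset ι) :
    #(s ∆ t) + 2 * #(s ∩ t) = #s + #t := by
  have := sum_symmDiff_add_sum_inter_add_sum_inter (fun _ => 1) s t
  simp only [sum_const, smul_eq_mul, mul_one] at this
  omega

theorem neg_one_pow_card_inter_symmDiff {R : Type*} [Ring R]
    (w a b : Finset ι) :
    (-1 : R) ^ #(w ∩ (a ∆ b)) = (-1) ^ #(w ∩ a) * (-1) ^ #(w ∩ b) := by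
  rw [← pow_add, ← card_symmDiff_add_two_mul_card_inter, ← inter_symmDiff_distrib_left, pow_add,
    pow_mul, neg_one_sq, one_pow, mul_one]

theorem neg_one_pow_card_symmDiff_inter {R : Type*} [Ring R]
    (a b w : Finset ι) :
    (-1 : R) ^ #(a ∆ b ∩ w) = (-1) ^ #(a ∩ w) * (-1) ^ #(b ∩ w) := by
  simp only [inter_comm _ w]
  exact neg_one_pow_card_inter_symmDiff w a b

theorem two_dvd_card_inter_symmDiff {w a b : Finset ι} (ha : 2 ∣ #(w ∩ a)) (hb : 2 ∣ #(w ∩ b)) :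
    2 ∣ #(w ∩ (a ∆ b)) := by
  have := card_symmDiff_add_two_mul_card_inter (w ∩ a) (w ∩ b)
  rw [← inter_symmDiff_distrib_left] at this
  omega

theorem two_dvd_card_symmDiff_inter {a b w : Finset ι} (ha : 2 ∣ #(a ∩ w)) (hb : 2 ∣ #(b ∩ w)) :
    2 ∣ #(a ∆ b ∩ w) := by
  have := card_symmDiff_add_two_mul_card_inter (a ∩ w) (b ∩ w)
  rw [← inter_symmDiff_distrib_right] at this
  omega

theorem g_symmDiff (b : ι → ℤ) (s t : Finset ι) :
    g b (s ∆ t) = g b s + g b t - 2 * g b (s ∩ t) := by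
  have := sum_symmDiff_add_sum_inter_add_sum_inter b s t
  simp only [g]
  omega

theorem g_symmDiff_symmDiff (b : ι → ℤ) (x α c : Finset ι) :
    g b (x ∆ α ∆ c) = g b x + g b (α ∆ c) - 2 * g b (α ∩ x) - 2 * g b (x ∩ c)
      + 4 * g b (α ∩ x ∩ c) := by
  rw [symmDiff_assoc, g_symmDiff b x, inter_symmDiff_distrib_left, g_symmDiff b (x ∩ α),
    show x ∩ α ∩ (x ∩ c) = α ∩ x ∩ c by ext; simp; tauto, inter_comm x α]
  ring

end SymmDiff

section Annihilator

variable {ι : Type*} [DecidableEq ι]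

theorem subset_closure (T : Set (Finset ι)) : T ⊆ closure T :=
  fun _ hx _ hS => hS.2 hx

theorem closure_subset {T S : Set (Finset ι)} (hS : IsSubgroup S) (h : T ⊆ S) : closure T ⊆ S :=
  fun _ hx => hx S ⟨hS, h⟩

theorem isSubgroup_Zof (K : Set (Finset ι)) : IsSubgroup (Zof K) :=
  ⟨fun _ _ => by simp, fun _ ha _ ha' h hh => two_dvd_card_symmDiff_inter (ha h hh) (ha' h hh)⟩

theorem Zof_anti {K L : Set (Finset ι)} (h : K ⊆ L) : Zof L ⊆ Zof K :=
  fun _ hγ k hk => hγ k (h hk)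

theorem subset_Zof_Zof (K : Set (Finset ι)) : K ⊆ Zof (Zof K) :=
  fun k hk γ hγ => by rw [inter_comm]; exact hγ k hk

theorem Zof_Zof_Zof (K : Set (Finset ι)) : Zof (Zof (Zof K)) = Zof K :=
  (Zof_anti (subset_Zof_Zof K)).antisymm (subset_Zof_Zof (Zof K))

theorem Zof_subset_Zof_closure (T : Set (Finset ι)) : Zof T ⊆ Zof (closure T) := by
  intro γ hγ
  have hsub : IsSubgroup {h | 2 ∣ #(γ ∩ h)} :=
    ⟨by simp, fun a ha a' ha' => two_dvd_card_inter_symmDiff ha ha'⟩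
  exact fun h hh => closure_subset hsub hγ hh

end Annihilator

/-- Translating by an element `p₀` of `P` with `#(w ∩ p₀)` odd flips the sign of every term. -/
theorem sum_neg_one_pow_card_inter_eq_zero {P : Set (Finset Q)} (hP : IsSubgroup P)
    {w : Finset Q} (hw : w ∉ Zof P) :
    ∑ p ∈ (Set.toFinite P).toFinset, (-1 : ℂ) ^ #(w ∩ p) = 0 := by
  obtain ⟨p₀, hp₀, hodd⟩ : ∃ p₀ ∈ P, ¬ 2 ∣ #(w ∩ p₀) := by simpa [Zof] using hw
  have hsign : (-1 : ℂ) ^ #(w ∩ p₀) = -1 := Odd.neg_one_pow (Nat.odd_iff.2 (by omega))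
  have hflip : ∑ p ∈ (Set.toFinite P).toFinset, (-1 : ℂ) ^ #(w ∩ p) =
      -∑ p ∈ (Set.toFinite P).toFinset, (-1 : ℂ) ^ #(w ∩ p) := by
    rw [← sum_neg_distrib]
    refine sum_equiv (symmDiff_left_involutive p₀).toPerm (fun p => ?_) (fun p _ => ?_)
    · simp only [Set.Finite.mem_toFinset, Function.Involutive.coe_toPerm]
      exact ⟨fun hp => hP.2 p hp p₀ hp₀, fun hp => by
        simpa [symmDiff_symmDiff_cancel_right] using hP.2 _ hp p₀ hp₀⟩
    · simp [neg_one_pow_card_inter_symmDiff, hsign]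
  linear_combination hflip / 2

open scoped Classical in
theorem inv_card_mul_sum_neg_one_pow_card_inter_of_coset {P E : Set (Finset Q)}
    (hP : IsSubgroup P) {z₀ : Finset Q} (hE : ∀ z, z ∈ E ↔ z ∆ z₀ ∈ P) (w : Finset Q) :
    ((Set.toFinite E).toFinset.card : ℂ)⁻¹ *
        ∑ z ∈ (Set.toFinite E).toFinset, (-1 : ℂ) ^ #(w ∩ z) =
      if w ∈ Zof P then (-1) ^ #(w ∩ z₀) else 0 := by
  set e := (symmDiff_left_involutive z₀).toPerm
  have he : ∀ z, z ∈ (Set.toFinite E).toFinset ↔ e z ∈ (Set.toFinite P).toFinset := by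
    simp [e, hE]
  rw [card_equiv e he, sum_equiv e he (g := fun p => (-1 : ℂ) ^ #(w ∩ (p ∆ z₀))) fun z _ => by
    simp [e, symmDiff_symmDiff_cancel_right]]
  simp only [neg_one_pow_card_inter_symmDiff, ← sum_mul]
  have hcard : ((Set.toFinite P).toFinset.card : ℂ) ≠ 0 := by
    exact_mod_cast (card_ne_zero_of_mem ((Set.toFinite P).mem_toFinset.2 hP.1))
  split_ifs with hw
  · rw [sum_congr rfl fun p hp => Even.neg_one_pow (even_iff_two_dvd.2 <|
      hw p ((Set.toFinite P).mem_toFinset.1 hp)), sum_const, nsmul_one]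
    field_simp
  · rw [sum_neg_one_pow_card_inter_eq_zero hP hw]
    simp

section Indicator

variable {ι : Type*} [DecidableEq ι]

theorem ind_symmDiff (a a' : Finset ι) :
    ind (a ∆ a') = ind a + ind a' := by
  ext q
  by_cases ha : q ∈ a <;> by_cases ha' : q ∈ a' <;> simp [ind, mem_symmDiff, ha, ha']
  rfl

theorem add_ind_add_ind (v : ι → ZMod 2) (s : Finset ι) : v + ind s + ind s = v := by
  rw [add_assoc, ZModModule.add_self, add_zero]

end Indicator

theorem supp_ind (s : Finset Q) : supp (ind s) = s := by
  ext q
  by_cases hq : q ∈ s <;> simp [supp, ind, hq]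

theorem ind_supp (v : Q → ZMod 2) : ind (supp v) = v := by
  ext q
  simp only [ind, supp, mem_filter, mem_univ, true_and]
  generalize v q = x
  fin_cases x <;> rfl

theorem supp_add_ind (v : Q → ZMod 2) (s : Finset Q) : supp (v + ind s) = supp v ∆ s := by
  conv_lhs => rw [← ind_supp v, ← ind_symmDiff, supp_ind]

theorem natCast_card_inter_supp (γ : Finset Q) (f : Q → ZMod 2) :
    (#(γ ∩ supp f) : ZMod 2) = ∑ q ∈ γ, f q := by
  rw [show γ ∩ supp f = γ.filter (f · = 1) by ext; simp [supp], natCast_card_filter]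
  refine sum_congr rfl fun q _ => ?_
  generalize f q = x
  fin_cases x <;> rfl

/-- Linear functionals on a subspace of `(ZMod 2)^Q` extend to the whole space, and those are
all of the form `γ ↦ #(γ ∩ z)`. -/
theorem IsSubgroup.exists_card_inter_eq {L : Set (Finset Q)} (hL : IsSubgroup L)
    (ψ : Finset Q → ZMod 2) (hψ : ∀ a ∈ L, ∀ a' ∈ L, ψ (a ∆ a') = ψ a + ψ a') :
    ∃ z : Finset Q, ∀ γ ∈ L, (#(γ ∩ z) : ZMod 2) = ψ γ := by
  have hψ₀ : ψ ∅ = 0 := by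
    simpa [ZModModule.add_self] using hψ ∅ hL.1 ∅ hL.1
  let W : AddSubgroup (Q → ZMod 2) :=
    { carrier := ind '' L
      add_mem' := by
        rintro _ _ ⟨a, ha, rfl⟩ ⟨a', ha', rfl⟩
        exact ⟨a ∆ a', hL.2 a ha a' ha', ind_symmDiff a a'⟩
      zero_mem' := ⟨∅, hL.1, by ext; simp [ind]⟩
      neg_mem' := by
        intro x hx
        rwa [ZModModule.neg_eq_self] }
  let ψW : W →+ ZMod 2 :=
    { toFun := fun x => ψ (supp x)
      map_zero' := by
        rw [show ((0 : W) : Q → ZMod 2) = ind ∅ by ext; simp [ind], supp_ind, hψ₀]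
      map_add' := by
        rintro ⟨_, a, ha, rfl⟩ ⟨_, a', ha', rfl⟩
        simp only [AddSubgroup.coe_add, ← ind_symmDiff, supp_ind]
        exact hψ a ha a' ha' }
  obtain ⟨φ, hφ⟩ :=
    LinearMap.exists_extend (p := AddSubgroup.toZModSubmodule 2 W) (ψW.toZModLinearMap 2)
  refine ⟨supp fun q => φ fun j => if q = j then 1 else 0, fun γ hγ => ?_⟩
  have hφγ : φ (ind γ) = ψ γ := by
    refine (LinearMap.congr_fun hφ ⟨ind γ, γ, hγ, rfl⟩).trans ?_
    change ψ (supp (ind γ)) = ψ γ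
    rw [supp_ind]
  rw [← hφγ, LinearMap.pi_apply_eq_sum_univ, natCast_card_inter_supp]
  simp [ind, sum_ite_mem]

noncomputable def ζ : ℂ := Complex.exp (Real.pi * Complex.I / 4)

theorem isPrimitiveRoot_ζ : IsPrimitiveRoot ζ 8 := by
  rw [ζ]
  convert Complex.isPrimitiveRoot_exp 8 (by norm_num) using 2
  push_cast
  ring

theorem ζ_ne_zero : ζ ≠ 0 := isPrimitiveRoot_ζ.ne_zero (by norm_num)

theorem ζ_zpow_eq_of_modEq {k l : ℤ} (h : k ≡ l [ZMOD 8]) : ζ ^ k = ζ ^ l := by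
  rw [← sub_add_cancel k l, zpow_add₀ ζ_ne_zero,
    (isPrimitiveRoot_ζ.zpow_eq_one_iff_dvd _).2 (by exact_mod_cast h.symm.dvd), one_mul]

theorem neg_one_pow_eq_ζ_zpow (n : ℕ) : (-1 : ℂ) ^ n = ζ ^ (4 * (n : ℤ)) := by
  rw [zpow_mul, zpow_natCast, show ζ ^ (4 : ℤ) = -1 by
    rw [ζ, ← Complex.exp_int_mul]; convert Complex.exp_pi_mul_I using 2; push_cast; ring]

theorem star_ζ_zpow (k : ℤ) : star (ζ ^ k) = ζ ^ (-k) := by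
  rw [star_zpow₀, zpow_neg, ← inv_zpow]
  congr 1
  rw [ζ, ← Complex.exp_neg, Complex.star_def, ← Complex.exp_conj]
  congr 1
  rw [map_div₀, map_mul, Complex.conj_ofReal, Complex.conj_I, map_ofNat]
  ring

section Code

variable {C : CSS Q} {b : Q → ℤ} {α : Finset Q}

theorem ZZ_eq_Zof : ZZ C = Zof C.SX := rfl

theorem SZ_subset_G : C.SZ ⊆ G C α := fun _ hf => subset_closure _ (Or.inl hf)

theorem inter_mem_G {β : Finset Q} (hβ : β ∈ ZX C) : α ∩ β ∈ G C α :=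
  subset_closure _ (Or.inr ⟨β, hβ, rfl⟩)

theorem Zof_G_subset_ZX : Zof (G C α) ⊆ ZX C := Zof_anti SZ_subset_G

theorem two_dvd_card_inter_inter {γ β : Finset Q} (hγ : γ ∈ Zof (G C α)) (hβ : β ∈ ZX C) :
    2 ∣ #(γ ∩ (α ∩ β)) :=
  hγ _ (inter_mem_G hβ)

theorem E_nonempty (hb : ∀ q, Odd (b q)) : (E C b α).Nonempty := by
  have heven : ∀ {γ γ'}, γ ∈ Zof (G C α) → γ' ∈ Zof (G C α) → 2 ∣ g b (γ ∩ α ∩ (γ' ∩ α)) := by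
    intro γ γ' hγ hγ'
    have hcard := two_dvd_card_inter_inter hγ (Zof_G_subset_ZX hγ')
    rw [show γ ∩ (α ∩ γ') = γ ∩ α ∩ (γ' ∩ α) by ext; simp; tauto] at hcard
    have hpar := two_dvd_g_sub_card hb (γ ∩ α ∩ (γ' ∩ α))
    omega
  have heven' : ∀ {γ}, γ ∈ Zof (G C α) → 2 ∣ g b (γ ∩ α) := fun hγ => by
    simpa using heven hγ hγ
  obtain ⟨z, hz⟩ := (isSubgroup_Zof (G C α)).exists_card_inter_eq
      (fun γ => ((g b (γ ∩ α) / 2 : ℤ) : ZMod 2)) fun a ha a' ha' => by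
    have hsplit := g_symmDiff b (a ∩ α) (a' ∩ α)
    have h₁ := heven ha ha'
    have h₂ := heven' ha
    have h₃ := heven' ha'
    rw [inter_symmDiff_distrib_right, ← Int.cast_add, ZMod.intCast_eq_intCast_iff_dvd_sub]
    omega
  refine ⟨z, fun γ hγ => ?_⟩
  have hzγ := hz γ hγ
  rw [← Int.cast_natCast, ZMod.intCast_eq_intCast_iff_dvd_sub] at hzγ
  have hγα := heven' hγ
  rw [inter_comm z γ, Int.ModEq]
  omega

theorem mem_E_iff_symmDiff_mem {z₀ : Finset Q} (hz₀ : z₀ ∈ E C b α) (z : Finset Q) :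
    z ∈ E C b α ↔ z ∆ z₀ ∈ Zof (Zof (G C α)) := by
  refine forall₂_congr fun γ hγ => ?_
  have hcard := card_symmDiff_add_two_mul_card_inter (z ∩ γ) (z₀ ∩ γ)
  rw [← inter_symmDiff_distrib_right] at hcard
  have hz₀γ := hz₀ γ hγ
  simp only [Int.ModEq] at *
  omega

theorem inter_mem_ZZ_iff_mem_Zof_G (hdual : Dual C) (htol : Tolerable C α) {δ : Finset Q}
    (hδ : δ ∈ ZX C) : α ∩ δ ∈ ZZ C ↔ δ ∈ Zof (G C α) := by
  constructor
  · intro hZZ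
    have hSZ : α ∩ δ ∈ C.SZ := by
      by_contra h
      exact htol _ (inter_mem_G hδ) ⟨hZZ, h⟩
    refine Zof_subset_Zof_closure _ ?_
    rintro t (ht | ⟨β, hβ, rfl⟩)
    · exact hδ t ht
    · rw [show δ ∩ (α ∩ β) = β ∩ (α ∩ δ) by ext; simp; tauto]
      exact hβ _ hSZ
  · intro hG
    have hSZ : α ∩ δ ∈ C.SZ := by
      rw [hdual.1]
      intro β hβ
      rw [show α ∩ δ ∩ β = δ ∩ (α ∩ β) by ext; simp; tauto]
      exact hG _ (inter_mem_G hβ)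
    exact fun c hc => C.comm _ hSZ c hc

theorem g_symmDiff_symmDiff_sub_modEq (hb : ∀ q, Odd (b q)) (htinv : TInv C b) {β γ c : Finset Q}
    (hβ : β ∈ ZX C) (hγ : γ ∈ ZX C) (hc : c ∈ C.SX) :
    g b (β ∆ α ∆ c) - g b (γ ∆ α ∆ c) ≡
      g b β - g b γ + 2 * (g b (α ∩ γ) - g b (α ∩ β)) + 4 * #(α ∩ (β ∆ γ) ∩ c) [ZMOD 8] := by
  have hc8 := htinv.1 c hc
  have hβc := htinv.2 c hc β hβ
  have hγc := htinv.2 c hc γ hγ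
  have hβ_exp := g_symmDiff_symmDiff b β α c
  have hγ_exp := g_symmDiff_symmDiff b γ α c
  have hcard := card_symmDiff_add_two_mul_card_inter (α ∩ β ∩ c) (α ∩ γ ∩ c)
  rw [← inter_symmDiff_distrib_right, ← inter_symmDiff_distrib_left] at hcard
  have hβ_par := two_dvd_g_sub_card hb (α ∩ β ∩ c)
  have hγ_par := two_dvd_g_sub_card hb (α ∩ γ ∩ c)
  simp only [Int.ModEq]
  omega

theorem two_mul_g_inter_sub_modEq_of_mem_E (hb : ∀ q, Odd (b q)) {z₀ β γ : Finset Q}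
    (hz₀ : z₀ ∈ E C b α) (hβ : β ∈ ZX C) (hδ : β ∆ γ ∈ Zof (G C α)) :
    2 * (g b (α ∩ γ) - g b (α ∩ β)) ≡ 4 * #(β ∆ γ ∩ z₀) [ZMOD 8] := by
  have hz := hz₀ _ hδ
  rw [inter_comm _ α, inter_symmDiff_distrib_left, g_symmDiff, inter_comm z₀] at hz
  have hcard := two_dvd_card_inter_inter hδ hβ
  have hsdiff : β ∆ γ ∩ (α ∩ β) = (α ∩ β) \ (α ∩ β ∩ (α ∩ γ)) := by
    ext; simp [mem_symmDiff]; tauto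
  have hpar := two_dvd_g_sub_card hb (β ∆ γ ∩ (α ∩ β))
  rw [hsdiff, g, sum_sdiff_eq_sub inter_subset_left] at hpar
  rw [hsdiff] at hcard
  simp only [Int.ModEq, g] at *
  omega

open scoped Classical in
theorem avg_SX_U_phase_eq_avg_E (hb : ∀ q, Odd (b q)) (hdual : Dual C) (htol : Tolerable C α)
    (htinv : TInv C b) {z₀ β γ : Finset Q} (hz₀ : z₀ ∈ E C b α) (hβ : β ∈ ZX C)
    (hγ : γ ∈ ZX C) :
    ((Set.toFinite C.SX).toFinset.card : ℂ)⁻¹ *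
        ∑ c ∈ (Set.toFinite C.SX).toFinset, ζ ^ (g b (β ∆ α ∆ c) - g b (γ ∆ α ∆ c)) =
      ζ ^ (g b β - g b γ) * (((Set.toFinite (E C b α)).toFinset.card : ℂ)⁻¹ *
        ∑ z ∈ (Set.toFinite (E C b α)).toFinset, (-1) ^ #(β ∩ z) * (-1) ^ #(γ ∩ z)) := by
  have hδ : β ∆ γ ∈ ZX C := (isSubgroup_Zof C.SZ).2 β hβ γ hγ
  have hSX : ∀ c, c ∈ C.SX ↔ c ∆ ∅ ∈ C.SX := fun c => by rw [← bot_eq_empty, symmDiff_bot]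
  have hphase : ∀ c ∈ (Set.toFinite C.SX).toFinset,
      ζ ^ (g b (β ∆ α ∆ c) - g b (γ ∆ α ∆ c)) =
        ζ ^ (g b β - g b γ + 2 * (g b (α ∩ γ) - g b (α ∩ β))) * (-1) ^ #(α ∩ (β ∆ γ) ∩ c) := by
    intro c hc
    rw [neg_one_pow_eq_ζ_zpow, ← zpow_add₀ ζ_ne_zero]
    exact ζ_zpow_eq_of_modEq (g_symmDiff_symmDiff_sub_modEq hb htinv hβ hγ (by simpa using hc))
  simp only [← neg_one_pow_card_symmDiff_inter (R := ℂ)]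
  rw [sum_congr rfl hphase, ← mul_sum, mul_left_comm,
    inv_card_mul_sum_neg_one_pow_card_inter_of_coset C.hSX hSX,
    inv_card_mul_sum_neg_one_pow_card_inter_of_coset (isSubgroup_Zof _)
      (mem_E_iff_symmDiff_mem hz₀),
    Zof_Zof_Zof, ← ZZ_eq_Zof, inter_mem_ZZ_iff_mem_Zof_G hdual htol hδ]
  split_ifs with hG
  · rw [zpow_add₀ ζ_ne_zero,
      ζ_zpow_eq_of_modEq (two_mul_g_inter_sub_modEq_of_mem_E hb hz₀ hβ hG), ← neg_one_pow_eq_ζ_zpow]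
    simp
  · simp

end Code

section Matrices

theorem XM_mul_apply (c : Finset Q) (A : M Q) (u v : Q → ZMod 2) :
    (XM c * A) u v = A (u + ind c) v := by
  have hiff : ∀ w, u = w + ind c ↔ w = u + ind c := fun w => by
    constructor <;> rintro rfl <;> rw [add_ind_add_ind]
  simp [XM, Matrix.mul_apply, hiff]

theorem mul_XM_apply (c : Finset Q) (A : M Q) (u v : Q → ZMod 2) :
    (A * XM c) u v = A u (v + ind c) := by
  simp [XM, Matrix.mul_apply]

theorem UM_mul_mul_conjTranspose_apply (b : Q → ℤ) (A : M Q) (u v : Q → ZMod 2) :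
    (UM b * A * (UM b)ᴴ) u v = ζ ^ (g b (supp u) - g b (supp v)) * A u v := by
  rw [UM, Matrix.diagonal_conjTranspose, Matrix.mul_diagonal, Matrix.diagonal_mul, Pi.star_apply,
    ← ζ, star_ζ_zpow, zpow_sub₀ ζ_ne_zero, zpow_neg]
  ring

theorem ZM_mul_mul_ZM_apply (z : Finset Q) (A : M Q) (u v : Q → ZMod 2) :
    (ZM z * A * ZM z) u v = (-1) ^ #(supp u ∩ z) * (-1) ^ #(supp v ∩ z) * A u v := by
  rw [ZM, Matrix.mul_diagonal, Matrix.diagonal_mul]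
  ring

variable {C : CSS Q} {ρ : M Q}

theorem Encoded.apply_add_ind (hρ : Encoded C ρ) {c : Finset Q} (hc : c ∈ C.SX)
    (u v : Q → ZMod 2) : ρ (u + ind c) (v + ind c) = ρ u v := by
  calc ρ (u + ind c) (v + ind c) = (XM c * ρ * XM c) u v := by rw [mul_XM_apply, XM_mul_apply]
    _ = ρ u v := by rw [(hρ.2.1 c hc).1, (hρ.2.1 c hc).2]

theorem Encoded.supp_mem_ZX (hρ : Encoded C ρ) {u v : Q → ZMod 2} (h : ρ u v ≠ 0) :
    supp u ∈ ZX C ∧ supp v ∈ ZX C := by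
  have hsign : ∀ f ∈ C.SZ, (-1 : ℂ) ^ #(supp u ∩ f) = 1 ∧ (-1 : ℂ) ^ #(supp v ∩ f) = 1 := by
    intro f hf
    have hl := congrFun (congrFun (hρ.2.2 f hf).1 u) v
    have hr := congrFun (congrFun (hρ.2.2 f hf).2 u) v
    rw [ZM, Matrix.diagonal_mul] at hl
    rw [ZM, Matrix.mul_diagonal] at hr
    exact ⟨mul_right_cancel₀ h (hl.trans (one_mul _).symm),
      mul_left_cancel₀ h (hr.trans (mul_one _).symm)⟩
  simp only [neg_one_pow_eq_one_iff_even (R := ℂ) (by norm_num), even_iff_two_dvd] at hsign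
  exact ⟨fun f hf => (hsign f hf).1, fun f hf => (hsign f hf).2⟩

theorem Encoded.depolarize_U_apply (hρ : Encoded C ρ) (b : Q → ℤ) (α : Finset Q)
    {c : Finset Q} (hc : c ∈ C.SX) (u v : Q → ZMod 2) :
    (XM c * (UM b * (XM α * ρ * XM α) * (UM b)ᴴ) * XM c) (u + ind α) (v + ind α) =
      ζ ^ (g b (supp u ∆ α ∆ c) - g b (supp v ∆ α ∆ c)) * ρ u v := by
  have hshift : ∀ w : Q → ZMod 2, w + ind α + ind c + ind α = w + ind c := fun w => by
    rw [add_right_comm (w + ind α), add_ind_add_ind]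
  rw [mul_XM_apply, XM_mul_apply, UM_mul_mul_conjTranspose_apply, mul_XM_apply, XM_mul_apply,
    hshift, hshift, hρ.apply_add_ind hc, supp_add_ind, supp_add_ind, supp_add_ind, supp_add_ind]

end Matrices

theorem transversal_T_propagation_tolerable_general
    (C : CSS Q) (b : Q → ℤ) (hb : ∀ q, Odd (b q))
    (hdual : Dual C) (htinv : TInv C b)
    (α : Finset Q) (htol : Tolerable C α) (ρ : M Q) (hρ : Encoded C ρ) :
    (E C b α).Nonempty ∧
    (((Set.toFinite C.SX).toFinset.card : ℂ))⁻¹ •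
        ∑ c ∈ (Set.toFinite C.SX).toFinset,
          XM c * (UM b * (XM α * ρ * XM α) * (UM b)ᴴ) * XM c
      = XM α *
        ((((Set.toFinite (E C b α)).toFinset.card : ℂ))⁻¹ •
          ∑ z ∈ (Set.toFinite (E C b α)).toFinset,
            ZM z * (UM b * ρ * (UM b)ᴴ) * ZM z) * XM α := by
  obtain ⟨z₀, hz₀⟩ := E_nonempty hb
  refine ⟨⟨z₀, hz₀⟩, ?_⟩
  ext u v
  obtain ⟨u, rfl⟩ : ∃ u', u = u' + ind α := ⟨u + ind α, (add_ind_add_ind u α).symm⟩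
  obtain ⟨v, rfl⟩ : ∃ v', v = v' + ind α := ⟨v + ind α, (add_ind_add_ind v α).symm⟩
  rw [mul_XM_apply, XM_mul_apply, add_ind_add_ind, add_ind_add_ind]
  simp only [Matrix.smul_apply, Matrix.sum_apply, smul_eq_mul, ZM_mul_mul_ZM_apply,
    UM_mul_mul_conjTranspose_apply]
  rw [sum_congr rfl fun c hc => hρ.depolarize_U_apply b α ((Set.toFinite _).mem_toFinset.1 hc) u v,
    ← sum_mul, ← sum_mul]
  by_cases hr : ρ u v = 0
  · simp [hr]
  obtain ⟨hu, hv⟩ := hρ.supp_mem_ZX hr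
  linear_combination ρ u v * avg_SX_U_phase_eq_avg_E hb hdual htol htinv hz₀ hu hv

/-- Theorem 1 (tolerable case): a tolerable `X` error propagates through the transversal
T-type gate `U` followed by `S_X`-depolarization into the original error together with a
uniformly random `Z` error drawn from `E_α` applied after `U`. -/
theorem transversal_T_propagation_tolerable
    (C : CSS Q) (b : Q → ℤ) (hb : ∀ q, Odd (b q))
    (hdual : Dual C) (hsingle : SingleQubit C) (hinter : Inter C) (htinv : TInv C b)
    (α : Finset Q) (htol : Tolerable C α) (ρ : M Q) (hρ : Encoded C ρ) :
    (E C b α).Nonempty ∧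
    (((Set.toFinite C.SX).toFinset.card : ℂ))⁻¹ •
        ∑ c ∈ (Set.toFinite C.SX).toFinset,
          XM c * (UM b * (XM α * ρ * XM α) * (UM b)ᴴ) * XM c
      = XM α *
        ((((Set.toFinite (E C b α)).toFinset.card : ℂ))⁻¹ •
          ∑ z ∈ (Set.toFinite (E C b α)).toFinset,
            ZM z * (UM b * ρ * (UM b)ᴴ) * ZM z) * XM α :=
  transversal_T_propagation_tolerable_general C b hb hdual htinv α htol ρ hρ

end CC
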